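/- Let T be a phylogenetic tree with labeled vertex set L and let G be its distance graph. Let h be a hidden vertex of T such that some labeled vertex l is a leaf of T, is adjacent to h in T, and satisfies l ∈ Sg(h). Then for every v ∈ Sg(h), δ_max(l) ≤ δ_max(v), where δ_max(u) is the maximum degree of u over all MSTs of G. -/

import Mathlib

/-!
Since `l` is a leaf hanging off `h` and `v` is at least as close to `h` as `l`, every other
labeled `u` satisfies `d(v,u) ≤ d(v,h) + d(h,u) ≤ d(l,h) + d(h,u) = d(l,u)`. So in any MST an
edge `lu`, with `u` not on the tree path from `l` to `v`, can be replaced by `vu` without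
increasing the weight. Doing this until `l` has degree one moves all but one of the edges at `l`
to `v`, and since `v` already had degree at least one, the resulting MST gives `v` degree at
least `deg(l)`.
-/

open SimpleGraph

/-- The threshold subgraph `G_{≤ t}`: same vertices, only edges of weight `≤ t`. -/
def thresholdGraph {V : Type*} (G : SimpleGraph V) (w : Sym2 V → ℝ) (t : ℝ) :
    SimpleGraph V where
  Adj u v := G.Adj u v ∧ w s(u, v) ≤ t
  symm := by
    constructor
    intro u v hv
    exact ⟨hv.1.symm, by rw [Sym2.eq_swap]; exact hv.2⟩
  loopless := ⟨fun v hv => G.ne_of_adj hv.1 rfl⟩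

/-- The strict threshold subgraph `G_{< t}`. -/
def strictThresholdGraph {V : Type*} (G : SimpleGraph V) (w : Sym2 V → ℝ) (t : ℝ) :
    SimpleGraph V where
  Adj u v := G.Adj u v ∧ w s(u, v) < t
  symm := by
    constructor
    intro u v hv
    exact ⟨hv.1.symm, by rw [Sym2.eq_swap]; exact hv.2⟩
  loopless := ⟨fun v hv => G.ne_of_adj hv.1 rfl⟩

/-- The laminar family of an edge-weighted graph: the whole vertex set together with the
vertex sets of the connected components of every threshold subgraph. -/
def laminarFamily {V : Type*} (G : SimpleGraph V) (w : Sym2 V → ℝ) : Set (Set V) :=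
  insert Set.univ
    {S | ∃ (t : ℝ) (C : (thresholdGraph G w t).ConnectedComponent), S = C.supp}

/-- `M` is a spanning tree of `G`. -/
def IsSpanningTree {V : Type*} (G M : SimpleGraph V) : Prop :=
  M ≤ G ∧ M.IsTree

/-- Total weight of (the edges of) a graph. -/
noncomputable def totalWeight {V : Type*} [Finite V] (M : SimpleGraph V)
    (w : Sym2 V → ℝ) : ℝ :=
  ∑ e ∈ M.edgeSet.toFinite.toFinset, w e

/-- `M` is a minimum spanning tree of `G` with respect to the weights `w`. -/
def IsMST {V : Type*} [Finite V] (G : SimpleGraph V) (w : Sym2 V → ℝ)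
    (M : SimpleGraph V) : Prop :=
  IsSpanningTree G M ∧ ∀ M' : SimpleGraph V, IsSpanningTree G M' →
    totalWeight M w ≤ totalWeight M' w

/-- A phylogenetic tree: a finite tree with strictly positive edge lengths and a nonempty
set `L` of labeled vertices, each hidden vertex having degree at least 3. -/
structure PhyloTree (V : Type*) where
  finV : Finite V
  T : SimpleGraph V
  isTree : T.IsTree
  len : Sym2 V → ℝ
  len_pos : ∀ e ∈ T.edgeSet, 0 < len e
  L : Set V
  L_nonempty : L.Nonempty
  hidden_deg : ∀ v, v ∉ L → 3 ≤ (T.neighborSet v).ncard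

namespace PhyloTree

variable {V : Type*}

/-- The unique path between two vertices of the tree. -/
noncomputable def path (P : PhyloTree V) (u v : V) : P.T.Walk u v :=
  (P.isTree.existsUnique_path u v).exists.choose

lemma path_isPath (P : PhyloTree V) (u v : V) : (P.path u v).IsPath :=
  (P.isTree.existsUnique_path u v).exists.choose_spec

/-- The tree distance: the sum of the edge lengths along the unique path. -/
noncomputable def dist (P : PhyloTree V) (u v : V) : ℝ :=
  ((P.path u v).edges.map P.len).sum

lemma dist_comm (P : PhyloTree V) (u v : V) : P.dist u v = P.dist v u := by
  have h : (P.path u v).reverse = P.path v u :=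
    (P.isTree.existsUnique_path v u).unique ((P.path_isPath u v).reverse)
      (P.path_isPath v u)
  unfold dist
  rw [← h, SimpleGraph.Walk.edges_reverse, List.map_reverse, List.sum_reverse]

/-- The tree distance as a symmetric function on unordered pairs. -/
noncomputable def wdist (P : PhyloTree V) : Sym2 V → ℝ :=
  Sym2.lift ⟨fun u v => P.dist u v, fun u v => P.dist_comm u v⟩

/-- The surrogate set of a vertex: the labeled vertices closest to it. -/
def Sg (P : PhyloTree V) (h : V) : Set V :=
  {l | l ∈ P.L ∧ ∀ l' ∈ P.L, P.dist l h ≤ P.dist l' h}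

/-- `s` is the surrogate vertex `Sg_R(h)` of `h` w.r.t. the ranking `R`:
the element of the surrogate set of `h` of smallest `R`-value. -/
def IsSgR (P : PhyloTree V) (R : V → ℕ) (h : V) (s : V) : Prop :=
  s ∈ P.Sg h ∧ ∀ l ∈ P.Sg h, R s ≤ R l

/-- The edge weights of the distance graph of `P` (the complete graph on `↥P.L`). -/
noncomputable def wG (P : PhyloTree V) : Sym2 ↥P.L → ℝ :=
  fun e => P.wdist (e.map Subtype.val)

/-- An edge `e` of the distance graph lying in at least one MST (i.e. an edge of `g`). -/
def mstEdge (P : PhyloTree V) (e : Sym2 ↥P.L) : Prop :=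
  haveI := P.finV
  ∃ M : SimpleGraph ↥P.L, IsMST (⊤ : SimpleGraph ↥P.L) P.wG M ∧ e ∈ M.edgeSet

/-- `δ_max(v)`: the maximum degree of `v` over all MSTs of the distance graph. -/
noncomputable def deltaMax (P : PhyloTree V) (v : ↥P.L) : ℕ :=
  haveI := P.finV
  sSup {d : ℕ | ∃ M : SimpleGraph ↥P.L,
    IsMST (⊤ : SimpleGraph ↥P.L) P.wG M ∧ d = (M.neighborSet v).ncard}

end PhyloTree

/-- The smaller of the two ranks of the endpoints of an edge. -/
def sym2MinR {α : Type*} (R : α → ℕ) : Sym2 α → ℕ :=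
  Sym2.lift ⟨fun a b => min (R a) (R b), fun a b => min_comm _ _⟩

/-- The larger of the two ranks of the endpoints of an edge. -/
def sym2MaxR {α : Type*} (R : α → ℕ) : Sym2 α → ℕ :=
  Sym2.lift ⟨fun a b => max (R a) (R b), fun a b => max_comm _ _⟩

/-- The strict total order `<_R` on edges: first by weight, then by the smaller rank of
the endpoints, then by the larger rank of the endpoints. -/
def edgeLT {α : Type*} (w : Sym2 α → ℝ) (R : α → ℕ) (e f : Sym2 α) : Prop :=
  w e < w f ∨ (w e = w f ∧ (sym2MinR R e < sym2MinR R f ∨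
    (sym2MinR R e = sym2MinR R f ∧ sym2MaxR R e < sym2MaxR R f)))

/-- `M` is the vertex-ranked MST of `G` w.r.t. the ranking `R`: a spanning tree such that
every non-tree edge `{u,v}` of `G` is the `<_R`-greatest edge of the cycle it closes,
i.e. every edge of the `M`-path from `u` to `v` is `<_R`-smaller than `{u,v}`. -/
def IsVRMST {α : Type*} (G : SimpleGraph α) (w : Sym2 α → ℝ) (R : α → ℕ)
    (M : SimpleGraph α) : Prop :=
  IsSpanningTree G M ∧ ∀ u v : α, G.Adj u v → ¬M.Adj u v →
    ∀ p : M.Walk u v, p.IsPath → ∀ f ∈ p.edges, edgeLT w R f s(u, v)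

namespace SimpleGraph

variable {V : Type*} {G H : SimpleGraph V}

lemma Reachable.of_forall_adj_reachable (h : ∀ ⦃a b⦄, G.Adj a b → H.Reachable a b) {u v : V}
    (huv : G.Reachable u v) : H.Reachable u v := by
  obtain ⟨p⟩ := huv
  induction p with
  | nil => rfl
  | cons hadj _ ih => exact (h hadj).trans ih

lemma Connected.of_forall_adj_reachable (hG : G.Connected)
    (h : ∀ ⦃a b⦄, G.Adj a b → H.Reachable a b) : H.Connected :=
  haveI := hG.nonempty
  ⟨fun u v => (hG.preconnected u v).of_forall_adj_reachable h⟩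

lemma IsTree.not_reachable_deleteEdges (hG : G.IsTree) {a b : V} (hab : G.Adj a b) :
    ¬ (G.deleteEdges {s(a, b)}).Reachable a b :=
  isAcyclic_iff_forall_adj_isBridge.mp hG.isAcyclic hab

theorem IsTree.deleteEdges_sup_edge (hG : G.IsTree) {a b x y : V} (hab : G.Adj a b)
    (hax : (G.deleteEdges {s(a, b)}).Reachable a x)
    (hby : (G.deleteEdges {s(a, b)}).Reachable b y) :
    (G.deleteEdges {s(a, b)} ⊔ edge x y).IsTree := by
  set G' := G.deleteEdges {s(a, b)}
  have hxy : ¬ G'.Reachable x y := fun h =>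
    hG.not_reachable_deleteEdges hab (hax.trans (h.trans hby.symm))
  have hxy_adj : (G' ⊔ edge x y).Adj x y :=
    Or.inr ((edge_adj ..).mpr ⟨Or.inl ⟨rfl, rfl⟩, fun h => hxy (h ▸ .rfl)⟩)
  have hab' : (G' ⊔ edge x y).Reachable a b :=
    (hax.mono le_sup_left).trans (hxy_adj.reachable.trans (hby.symm.mono le_sup_left))
  refine ⟨hG.connected.of_forall_adj_reachable fun c d hcd => ?_,
    (hG.isAcyclic.anti (deleteEdges_le _)).sup_edge_of_not_reachable hxy⟩
  by_cases he : s(c, d) = s(a, b)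
  · rcases Sym2.eq_iff.mp he with ⟨rfl, rfl⟩ | ⟨rfl, rfl⟩
    exacts [hab', hab'.symm]
  · exact Adj.reachable (Or.inl ((deleteEdges_adj ..).mpr ⟨hcd, he⟩))

end SimpleGraph

section MinimumSpanningTree

variable {α : Type*} [Finite α] {w : Sym2 α → ℝ}

lemma totalWeight_deleteEdges_sup_edge {M : SimpleGraph α} {a b x y : α} (hab : M.Adj a b)
    (hxy : ¬ M.Adj x y) (hne : x ≠ y) :
    totalWeight (M.deleteEdges {s(a, b)} ⊔ edge x y) w
      = totalWeight M w - w s(a, b) + w s(x, y) := by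
  classical
  have hedges : (M.deleteEdges {s(a, b)} ⊔ edge x y).edgeSet.toFinite.toFinset
      = insert s(x, y) (M.edgeSet.toFinite.toFinset.erase s(a, b)) := by
    ext e
    simp only [Set.Finite.mem_toFinset, edgeSet_sup, edgeSet_deleteEdges, edgeSet_edge_of_ne hne,
      Finset.mem_insert, Finset.mem_erase, Set.mem_union, Set.mem_sdiff, Set.mem_singleton_iff]
    tauto
  have hxy' : s(x, y) ∉ M.edgeSet.toFinite.toFinset.erase s(a, b) := by simp [hxy]
  unfold totalWeight
  rw [hedges, Finset.sum_insert hxy', Finset.sum_erase_eq_sub (by simpa using hab)]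
  ring

variable {M : SimpleGraph α} {l v : α}

/-- Trade an edge `lu`, with `u` off the tree path from `l` to `v`, for `vu`. -/
lemma IsMST.exists_ncard_neighborSet_transfer (hM : IsMST ⊤ w M) (hlv : l ≠ v)
    (hw : ∀ u, u ≠ l → u ≠ v → w s(v, u) ≤ w s(l, u))
    (hl : 1 < (M.neighborSet l).ncard) :
    ∃ M', IsMST ⊤ w M' ∧ (M'.neighborSet l).ncard + 1 = (M.neighborSet l).ncard ∧
      (M'.neighborSet v).ncard = (M.neighborSet v).ncard + 1 := by
  obtain ⟨⟨-, htree⟩, hmin⟩ := hM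
  obtain ⟨p, hp⟩ := htree.connected.exists_isPath l v
  obtain ⟨u, hu, hup⟩ := Set.exists_ne_of_one_lt_ncard hl p.snd
  have hlu : M.Adj l u := hu
  have hu_notin : u ∉ p.support := fun h => hup (htree.isAcyclic.eq_snd_of_adj_start hp hlu h)
  have hul : u ≠ l := hlu.ne'
  have huv : u ≠ v := fun h => hu_notin (h ▸ p.end_mem_support)
  have hreach : (M.deleteEdges {s(l, u)}).Reachable l v :=
    ⟨p.toDeleteEdges _ fun e he hmem => hu_notin
      (p.snd_mem_support_of_mem_edges (Set.mem_singleton_iff.mp hmem ▸ he))⟩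
  have hvu : ¬ M.Adj v u := fun h => htree.not_reachable_deleteEdges hlu
    (hreach.trans (Adj.reachable ((deleteEdges_adj ..).mpr ⟨h, by simp [hlv.symm, hul]⟩)))
  refine ⟨M.deleteEdges {s(l, u)} ⊔ edge v u,
    ⟨⟨le_top, htree.deleteEdges_sup_edge hlu hreach .rfl⟩, fun M'' hM'' => ?_⟩, ?_, ?_⟩
  · rw [totalWeight_deleteEdges_sup_edge hlu hvu huv.symm]
    linarith [hw u hul huv, hmin M'' hM'']
  · have : (M.deleteEdges {s(l, u)} ⊔ edge v u).neighborSet l = M.neighborSet l \ {u} := by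
      ext x; simp [edge_adj, hlv, hul.symm]
    rw [this, Set.ncard_sdiff_singleton_add_one hu]
  · have : (M.deleteEdges {s(l, u)} ⊔ edge v u).neighborSet v = insert u (M.neighborSet v) := by
      ext x; by_cases hx : x = u <;> simp [edge_adj, hlv.symm, huv.symm, hx]
    rw [this, Set.ncard_insert_of_notMem (show u ∉ M.neighborSet v from hvu)]

lemma IsMST.exists_ncard_neighborSet_add_le (hM : IsMST ⊤ w M) (hlv : l ≠ v)
    (hw : ∀ u, u ≠ l → u ≠ v → w s(v, u) ≤ w s(l, u)) :
    ∃ M', IsMST ⊤ w M' ∧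
      (M.neighborSet l).ncard + (M.neighborSet v).ncard ≤ (M'.neighborSet v).ncard + 1 := by
  induction hn : (M.neighborSet l).ncard generalizing M with
  | zero => exact ⟨M, hM, by omega⟩
  | succ n ih =>
    rcases le_or_gt (n + 1) 1 with h | h
    · exact ⟨M, hM, by omega⟩
    obtain ⟨M₁, hM₁, hl₁, hv₁⟩ := hM.exists_ncard_neighborSet_transfer hlv hw (hn ▸ h)
    obtain ⟨M', hM', hle⟩ := ih hM₁ (by omega)
    exact ⟨M', hM', by omega⟩

lemma IsMST.exists_ncard_neighborSet_le (hM : IsMST ⊤ w M) (hlv : l ≠ v)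
    (hw : ∀ u, u ≠ l → u ≠ v → w s(v, u) ≤ w s(l, u)) :
    ∃ M', IsMST ⊤ w M' ∧ (M.neighborSet l).ncard ≤ (M'.neighborSet v).ncard := by
  obtain ⟨M', hM', hle⟩ := hM.exists_ncard_neighborSet_add_le hlv hw
  have hv : 0 < (M.neighborSet v).ncard := (Set.ncard_pos (Set.toFinite _)).mpr
    ((hM.1.2.connected.preconnected l v).nonempty_neighborSet_right hlv)
  exact ⟨M', hM', by omega⟩

end MinimumSpanningTree

namespace PhyloTree

variable {V : Type*} (P : PhyloTree V)

lemma path_eq_of_isPath {u v : V} {p : P.T.Walk u v} (hp : p.IsPath) : P.path u v = p :=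
  (P.isTree.existsUnique_path u v).unique (P.path_isPath u v) hp

lemma dist_le_sum_len {u v : V} (p : P.T.Walk u v) : P.dist u v ≤ (p.edges.map P.len).sum := by
  classical
  obtain ⟨es, hperm, hsub⟩ :=
    p.bypass_isPath.isTrail.edges_nodup.subperm p.edges_bypass_subset_edges
  rw [dist, P.path_eq_of_isPath p.bypass_isPath, (hperm.map P.len).sum_eq.symm]
  refine (hsub.map P.len).sum_le_sum fun x hx => ?_
  obtain ⟨e, he, rfl⟩ := List.mem_map.mp hx
  exact (P.len_pos e (p.edges_subset_edgeSet he)).le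

lemma dist_triangle (a b c : V) : P.dist a c ≤ P.dist a b + P.dist b c := by
  simpa [dist] using P.dist_le_sum_len ((P.path a b).append (P.path b c))

lemma dist_of_adj {a b : V} (hab : P.T.Adj a b) : P.dist a b = P.len s(a, b) := by
  have hp : (Walk.cons hab .nil).IsPath := Walk.IsPath.nil.cons (by simpa using hab.ne)
  simp [dist, P.path_eq_of_isPath hp]

/-- The tree path from a leaf `l` to any other vertex starts with the edge to its neighbour. -/
lemma dist_leaf {l h u : V} (hleaf : (P.T.neighborSet l).ncard = 1) (hhl : P.T.Adj h l)
    (hul : u ≠ l) : P.dist l u = P.dist l h + P.dist h u := by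
  have hl : l ∉ (P.path h u).support :=
    (P.path_isPath h u).isTrail.not_mem_support_of_subsingleton_neighborSet hhl.ne' hul.symm
      (by obtain ⟨x, hx⟩ := Set.ncard_eq_one.mp hleaf; simp [hx])
  have hp : (Walk.cons hhl.symm (P.path h u)).IsPath := (P.path_isPath h u).cons hl
  rw [P.dist_of_adj hhl.symm]
  simp [dist, P.path_eq_of_isPath hp]

lemma dist_le_dist_of_leaf {l h v u : V} (hleaf : (P.T.neighborSet l).ncard = 1)
    (hhl : P.T.Adj h l) (hvl : P.dist v h ≤ P.dist l h) (hul : u ≠ l) :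
    P.dist v u ≤ P.dist l u :=
  calc P.dist v u ≤ P.dist v h + P.dist h u := P.dist_triangle v h u
    _ ≤ P.dist l h + P.dist h u := by linarith
    _ = P.dist l u := (P.dist_leaf hleaf hhl hul).symm

lemma wG_mk (a b : ↥P.L) : P.wG s(a, b) = P.dist a b := rfl

lemma deltaMax_le_deltaMax {l v : ↥P.L} (hlv : l ≠ v)
    (hw : ∀ u, u ≠ l → u ≠ v → P.wG s(v, u) ≤ P.wG s(l, u)) :
    P.deltaMax l ≤ P.deltaMax v := by
  have := P.finV
  have hbdd : BddAbove {d | ∃ M, IsMST ⊤ P.wG M ∧ d = (M.neighborSet v).ncard} :=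
    ⟨Nat.card ↥P.L, fun _ ⟨M, _, hd⟩ => hd ▸ Set.ncard_le_card _⟩
  refine csSup_le' fun d ⟨M, hM, hd⟩ => ?_
  obtain ⟨M', hM', hle⟩ := hM.exists_ncard_neighborSet_le hlv hw
  exact hd ▸ hle.trans (le_csSup hbdd ⟨M', hM', rfl⟩)

end PhyloTree

theorem leaf_minimizes_deltaMax_general {V : Type*} (P : PhyloTree V) (h : V)
    (l : V) (hleaf : (P.T.neighborSet l).ncard = 1) (hadj : P.T.Adj h l)
    (hl : l ∈ P.Sg h) :
    ∀ v, ∀ hv : v ∈ P.Sg h, P.deltaMax ⟨l, hl.1⟩ ≤ P.deltaMax ⟨v, hv.1⟩ := by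
  intro v hv
  rcases eq_or_ne l v with rfl | hlv
  · exact le_rfl
  refine P.deltaMax_le_deltaMax (fun heq => hlv (congrArg Subtype.val heq))
    fun u hul _ => ?_
  rw [P.wG_mk, P.wG_mk]
  exact P.dist_le_dist_of_leaf hleaf hadj (hv.2 l hl.1) fun heq => hul (Subtype.ext heq)

/-- a leaf `l` adjacent to a hidden vertex `h` and lying in `Sg(h)`
minimizes `δ_max` over the surrogate set `Sg(h)`. -/
theorem leaf_minimizes_deltaMax {V : Type*} (P : PhyloTree V) (h : V) (hh : h ∉ P.L)
    (l : V) (hleaf : (P.T.neighborSet l).ncard = 1) (hadj : P.T.Adj h l)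
    (hl : l ∈ P.Sg h) :
    ∀ v, ∀ hv : v ∈ P.Sg h, P.deltaMax ⟨l, hl.1⟩ ≤ P.deltaMax ⟨v, hv.1⟩ :=
  leaf_minimizes_deltaMax_general P h l hleaf hadj hl
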